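/- Let n ≥ 1 and work over ℂ. Let ξ_0,...,ξ_n be indeterminates with the SL(2,ℂ)-action coming from the binary form f = Σ_{k=0}^n C(n,k) ξ_k x^k y^{n-k} (i.e., for g ∈ SL(2,ℂ) with (x,y)ᵀ = g(x̄,ȳ)ᵀ, the ξ̄_k are defined by f = Σ C(n,k) ξ̄_k x̄^k ȳ^{n-k}). Let f_{k,n-k} be the bihomogeneous components of det(X+Y) for n×n indeterminate matrices X, Y, with SL(2,ℂ) acting by X ↦ αX+γY, Y ↦ βX+δY. Then the ℂ-algebra map ℂ[ξ_0,...,ξ_n] → ℂ[f_{n,0},...,f_{0,n}] sending C(n,k)·ξ_k ↦ f_{k,n-k} is an isomorphism of SL(2,ℂ)-modules (equivalently, of ℂ-algebras with compatible SL(2,ℂ)-actions). -/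

import Mathlib

/-!
Expanding the determinant column by column gives, for matrices over any commutative ring,
det(x•A + y•B) = ∑ₖ xᵏ yⁿ⁻ᵏ fₖ(A, B), where fₖ(A, B) is the sum of the determinants obtained by
taking k columns from A and the others from B; for generic A = X, B = Y these are the f_{k,n-k}.
Specialising X and Y to the two halves of a homogenised companion matrix sends the f_{k,n-k} to
arbitrarily prescribed values, so they are algebraically independent and ψ is injective.
Since x(αX+γY) + y(βX+δY) = (αx+βy)X + (γx+δy)Y, applying ψ to the identity defining σ_g and
applying g to the expansion of det(xX + yY) give two expansions of det((αx+βy)X + (γx+δy)Y);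
comparing coefficients (after setting y = 1) yields ψ(σ_g ξₖ) = g·ψ(ξₖ).
-/

open MvPolynomial

/-- The bihomogeneous component f_{k,n-k} of det(X+Y), X = (T_{ij0}), Y = (T_{ij1}). -/
noncomputable def fPoly (n k : ℕ) : MvPolynomial (Fin n × Fin n × Fin 2) ℂ :=
  ∑ S ∈ Finset.powersetCard k (Finset.univ : Finset (Fin n)),
    (Matrix.of fun i j =>
        if j ∈ S then
          (MvPolynomial.X (i, j, (0 : Fin 2)) : MvPolynomial (Fin n × Fin n × Fin 2) ℂ)
        else MvPolynomial.X (i, j, (1 : Fin 2))).det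

/-- The map ℂ[ξ₀,...,ξ_n] → ℂ[X,Y] sending C(n,k)·ξ_k to f_{k,n-k}. -/
noncomputable def psiMap (n : ℕ) :
    MvPolynomial (Fin (n + 1)) ℂ →ₐ[ℂ] MvPolynomial (Fin n × Fin n × Fin 2) ℂ :=
  MvPolynomial.aeval fun k : Fin (n + 1) =>
    MvPolynomial.C ((n.choose (k : ℕ) : ℂ))⁻¹ * fPoly n (k : ℕ)

/-- The action of g = ((α,β),(γ,δ)) ∈ SL(2,ℂ) on ℂ[X,Y]: X ↦ αX + γY, Y ↦ βX + δY. -/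
noncomputable def sl2Action (n : ℕ) (α β γ δ : ℂ) :
    MvPolynomial (Fin n × Fin n × Fin 2) ℂ →ₐ[ℂ] MvPolynomial (Fin n × Fin n × Fin 2) ℂ :=
  MvPolynomial.aeval fun v : Fin n × Fin n × Fin 2 =>
    if v.2.2 = 0 then
      MvPolynomial.C α * MvPolynomial.X (v.1, v.2.1, (0 : Fin 2)) +
        MvPolynomial.C γ * MvPolynomial.X (v.1, v.2.1, (1 : Fin 2))
    else
      MvPolynomial.C β * MvPolynomial.X (v.1, v.2.1, (0 : Fin 2)) +
        MvPolynomial.C δ * MvPolynomial.X (v.1, v.2.1, (1 : Fin 2))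

namespace Matrix

open Finset

section MixedDet

variable {m R S : Type*} [Fintype m] [DecidableEq m] [CommRing R] [CommRing S]

def mixedDet (k : ℕ) (A B : Matrix m m R) : R :=
  ∑ T ∈ powersetCard k univ, (of fun i j => if j ∈ T then A i j else B i j).det

theorem _root_.RingHom.map_mixedDet (φ : R →+* S) (k : ℕ) (A B : Matrix m m R) :
    φ (mixedDet k A B) = mixedDet k (φ.mapMatrix A) (φ.mapMatrix B) := by
  simp only [mixedDet, map_sum, RingHom.map_det]
  refine sum_congr rfl fun T _ => congrArg det ?_
  ext i j
  simp only [RingHom.mapMatrix_apply, map_apply, of_apply]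
  split_ifs <;> rfl

theorem det_smul_add_smul (x y : R) (A B : Matrix m m R) :
    (x • A + y • B).det =
      ∑ k ∈ range (Fintype.card m + 1), x ^ k * y ^ (Fintype.card m - k) * mixedDet k A B := by
  -- `det` is multilinear in the rows, while `mixedDet` chooses columns: hence the transposes.
  have hterm (T : Finset m) :
      detRowAlternating (T.piecewise (fun i => x • Aᵀ i) (fun i => y • Bᵀ i)) =
        x ^ #T * y ^ (Fintype.card m - #T) *
          (of fun i j => if j ∈ T then A i j else B i j).det := by
    have hpiece : T.piecewise (fun i => x • Aᵀ i) (fun i => y • Bᵀ i) = fun i =>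
        T.piecewise (fun _ => x) (fun _ => y) i • fun j => if i ∈ T then A j i else B j i := by
      ext i j
      by_cases hi : i ∈ T <;> simp [hi]
    rw [hpiece, AlternatingMap.map_smul_univ, prod_piecewise, prod_const, prod_const,
      ← compl_eq_univ_sdiff, card_compl, univ_inter, smul_eq_mul, ← det_transpose]
    rfl
  calc (x • A + y • B).det
      = detRowAlternating ((fun i => x • Aᵀ i) + (fun i => y • Bᵀ i)) := by
        rw [← det_transpose]; rfl
    _ = _ := by
      rw [AlternatingMap.map_add_univ, ← powerset_univ, sum_powerset, card_univ]
      refine sum_congr rfl fun k _ => ?_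
      rw [mixedDet, mul_sum]
      refine sum_congr rfl fun T hT => ?_
      rw [hterm, (mem_powersetCard.1 hT).2]

end MixedDet

section Companion

variable {R : Type*} [CommRing R]

/-- `x • companionX m u + y • companionY m u` has `x` on the diagonal and `-y` just above it in
its first `m` rows, and last row `(u₀ y, …, u_{m-1} y, uₘ y + u_{m+1} x)`. -/
def companionX (m : ℕ) (u : ℕ → R) : Matrix (Fin (m + 1)) (Fin (m + 1)) R :=
  of fun i j => if (i : ℕ) = m then (if (j : ℕ) = m then u (m + 1) else 0)
    else if (j : ℕ) = i then 1 else 0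

def companionY (m : ℕ) (u : ℕ → R) : Matrix (Fin (m + 1)) (Fin (m + 1)) R :=
  of fun i j => if (i : ℕ) = m then u j else if (j : ℕ) = i + 1 then -1 else 0

theorem submatrix_zero_succ_companion (x y : R) (m : ℕ) (u : ℕ → R) :
    (x • companionX (m + 1) u + y • companionY (m + 1) u).submatrix (Fin.succAbove 0) Fin.succ =
      x • companionX m (fun k => u (k + 1)) + y • companionY m (fun k => u (k + 1)) := by
  ext i j
  simp only [submatrix_apply, add_apply, smul_apply, companionX, companionY, of_apply,
    Fin.succAbove_zero, Fin.val_succ, add_left_inj, smul_eq_mul]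

theorem det_submatrix_last_succ_companion (x y : R) (m : ℕ) (u : ℕ → R) :
    ((x • companionX (m + 1) u + y • companionY (m + 1) u).submatrix
      (Fin.last (m + 1)).succAbove Fin.succ).det = (-y) ^ (m + 1) := by
  have hsub : (x • companionX (m + 1) u + y • companionY (m + 1) u).submatrix
      (Fin.last (m + 1)).succAbove Fin.succ =
        of fun (i j : Fin (m + 1)) =>
          if (j : ℕ) = i then -y else if (j : ℕ) + 1 = i then x else 0 := by
    ext i j
    have := i.isLt
    simp only [Fin.succAbove_last, submatrix_apply, add_apply, smul_apply, companionX,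
      companionY, of_apply, Fin.val_castSucc, Fin.val_succ, smul_eq_mul]
    split_ifs <;> first | omega | ring
  rw [hsub, det_of_isLowerTriangular]
  · simp
  · intro i j (hij : i < j)
    simp only [of_apply]
    rw [if_neg (by omega), if_neg (by omega)]

theorem det_smul_companionX_add_smul_companionY (x y : R) (m : ℕ) (u : ℕ → R) :
    (x • companionX m u + y • companionY m u).det =
      ∑ k ∈ range (m + 2), u k * x ^ k * y ^ (m + 1 - k) := by
  induction m generalizing u with
  | zero =>
    simp [companionX, companionY, sum_range_succ]
    ring
  | succ m ih =>
    set M := x • companionX (m + 1) u + y • companionY (m + 1) u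
    have hM_zero : M 0 0 = x := by simp [M, companionX, companionY]
    have hM_last : M (Fin.last (m + 1)) 0 = y * u 0 := by simp [M, companionX, companionY]
    have hM_other (i : Fin (m + 2)) (h₀ : i ≠ 0) (h_last : i ≠ Fin.last (m + 1)) :
        M i 0 = 0 := by
      have h₀' : 0 ≠ (i : ℕ) := (Fin.val_ne_iff.2 h₀).symm
      have h_last' : (i : ℕ) ≠ m + 1 := Fin.val_ne_iff.2 h_last
      simp [M, companionX, companionY, h₀', h_last']
    rw [det_succ_column_zero, Fintype.sum_eq_add 0 (Fin.last (m + 1)) Fin.last_pos.ne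
      fun i ⟨h₀, h_last⟩ => by rw [hM_other i h₀ h_last, mul_zero, zero_mul]]
    rw [submatrix_zero_succ_companion, ih, det_submatrix_last_succ_companion, hM_zero, hM_last,
      sum_range_succ' _ (m + 2), Fin.val_zero, Fin.val_last, pow_zero, one_mul, mul_sum]
    have hsign : (-1 : R) ^ (m + 1) * (-y) ^ (m + 1) = y ^ (m + 1) := by rw [← mul_pow]; ring
    refine congrArg₂ (· + ·) (sum_congr rfl fun k _ => ?_) ?_
    · rw [Nat.add_sub_add_right]; ring
    · rw [Nat.sub_zero]
      linear_combination (y * u 0) * hsign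

end Companion

end Matrix

open Finset Matrix

theorem Polynomial.coeff_sum_fin_C_mul_X_pow {R : Type*} [Semiring R] {n : ℕ} (a : Fin n → R)
    (k : Fin n) : (∑ j : Fin n, C (a j) * X ^ (j : ℕ)).coeff k = a k := by
  simp [finsetSum_coeff, Fin.val_inj]

theorem Algebra.adjoin_range_smul_of_ne_zero {K A ι : Type*} [Field K] [Semiring A] [Algebra K A]
    (c : ι → K) (hc : ∀ i, c i ≠ 0) (s : ι → A) :
    adjoin K (Set.range fun i => c i • s i) = adjoin K (Set.range s) := by
  refine le_antisymm (adjoin_le ?_) (adjoin_le ?_) <;> rintro _ ⟨i, rfl⟩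
  · exact Subalgebra.smul_mem _ (subset_adjoin (Set.mem_range_self i)) _
  · simpa [smul_smul, hc i] using Subalgebra.smul_mem _
      (subset_adjoin (R := K) (Set.mem_range_self (f := fun i => c i • s i) i)) (c i)⁻¹

section Generic

variable {n : ℕ}

noncomputable def genericMatrix (n : ℕ) (e : Fin 2) :
    Matrix (Fin n) (Fin n) (MvPolynomial (Fin n × Fin n × Fin 2) ℂ) :=
  of fun i j => X (i, j, e)

theorem fPoly_eq_mixedDet (k : ℕ) :
    fPoly n k = mixedDet k (genericMatrix n 0) (genericMatrix n 1) := rfl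

theorem det_smul_add_smul_genericMatrix {R : Type*} [CommRing R]
    (φ : MvPolynomial (Fin n × Fin n × Fin 2) ℂ →+* R) (x y : R) :
    (x • φ.mapMatrix (genericMatrix n 0) + y • φ.mapMatrix (genericMatrix n 1)).det =
      ∑ k : Fin (n + 1), x ^ (k : ℕ) * y ^ (n - k) * φ (fPoly n k) := by
  rw [det_smul_add_smul, Fintype.card_fin, ← Fin.sum_univ_eq_sum_range]
  simp only [fPoly_eq_mixedDet, φ.map_mixedDet]

theorem coeff_det_X_smul_add_genericMatrix {R : Type*} [CommRing R]
    (φ : MvPolynomial (Fin n × Fin n × Fin 2) ℂ →+* R) (k : Fin (n + 1)) :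
    ((Polynomial.X : Polynomial R) • (Polynomial.C.comp φ).mapMatrix (genericMatrix n 0) +
      (Polynomial.C.comp φ).mapMatrix (genericMatrix n 1)).det.coeff k = φ (fPoly n k) := by
  rw [← one_smul (Polynomial R) ((Polynomial.C.comp φ).mapMatrix (genericMatrix n 1)),
    det_smul_add_smul_genericMatrix]
  simp only [one_pow, mul_one, RingHom.comp_apply]
  simp_rw [mul_comm (Polynomial.X ^ _)]
  exact Polynomial.coeff_sum_fin_C_mul_X_pow (fun j => φ (fPoly n j)) k

theorem exists_algHom_fPoly_eq {R : Type*} [CommRing R] [Algebra ℂ R] (hn : 1 ≤ n)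
    (u : Fin (n + 1) → R) :
    ∃ ε : MvPolynomial (Fin n × Fin n × Fin 2) ℂ →ₐ[ℂ] R, ∀ k : Fin (n + 1),
      ε (fPoly n k) = u k := by
  obtain ⟨m, rfl⟩ : ∃ m, n = m + 1 := ⟨n - 1, by omega⟩
  set v : ℕ → R := fun k => if h : k < m + 2 then u ⟨k, h⟩ else 0
  set ε : MvPolynomial (Fin (m + 1) × Fin (m + 1) × Fin 2) ℂ →ₐ[ℂ] R :=
    aeval fun e => if e.2.2 = 0 then companionX m v e.1 e.2.1 else companionY m v e.1 e.2.1
  refine ⟨ε, fun k => ?_⟩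
  have hX : (Polynomial.C.comp (ε : _ →+* R)).mapMatrix (genericMatrix (m + 1) 0) =
      companionX m (Polynomial.C ∘ v) := by
    ext i j
    simp [ε, genericMatrix, companionX, apply_ite Polynomial.C]
  have hY : (Polynomial.C.comp (ε : _ →+* R)).mapMatrix (genericMatrix (m + 1) 1) =
      companionY m (Polynomial.C ∘ v) := by
    ext i j
    simp [ε, genericMatrix, companionY, apply_ite Polynomial.C]
  have hcoeff := coeff_det_X_smul_add_genericMatrix (ε : _ →+* R) k
  rw [hX, hY, ← one_smul (Polynomial R) (companionY m _),
    det_smul_companionX_add_smul_companionY, ← Fin.sum_univ_eq_sum_range] at hcoeff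
  simp only [one_pow, mul_one, Function.comp_apply] at hcoeff
  rw [Polynomial.coeff_sum_fin_C_mul_X_pow (fun j => v j)] at hcoeff
  simpa [v] using hcoeff.symm

end Generic

section Psi

variable {n : ℕ}

theorem cast_choose_ne_zero (k : Fin (n + 1)) : (n.choose k : ℂ) ≠ 0 :=
  Nat.cast_ne_zero.2 (Nat.choose_pos (Nat.lt_succ_iff.1 k.isLt)).ne'

theorem psiMap_X (k : Fin (n + 1)) : psiMap n (X k) = (n.choose k : ℂ)⁻¹ • fPoly n k := by
  rw [psiMap, aeval_X, C_mul']

theorem psiMap_injective (hn : 1 ≤ n) : Function.Injective (psiMap n) := by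
  obtain ⟨ε, hε⟩ := exists_algHom_fPoly_eq hn
    fun k => (n.choose k : ℂ) • (X k : MvPolynomial (Fin (n + 1)) ℂ)
  have hinv : ε.comp (psiMap n) = AlgHom.id ℂ _ :=
    algHom_ext fun k => by simp [psiMap_X, hε, smul_smul, cast_choose_ne_zero k]
  exact Function.LeftInverse.injective (g := ε) fun p => AlgHom.congr_fun hinv p

theorem psiMap_range :
    (psiMap n).range = Algebra.adjoin ℂ (Set.range fun k : Fin (n + 1) => fPoly n k) := by
  rw [psiMap, ← Algebra.adjoin_range_eq_range_aeval]
  simp_rw [C_mul']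
  exact Algebra.adjoin_range_smul_of_ne_zero _ (fun k => inv_ne_zero (cast_choose_ne_zero k)) _

end Psi

section Equivariance

def IsBinaryFormAction {n : ℕ} (α β γ δ : ℂ)
    (σg : MvPolynomial (Fin (n + 1)) ℂ →ₐ[ℂ] MvPolynomial (Fin (n + 1)) ℂ) : Prop :=
  ∑ k : Fin (n + 1), C (n.choose k : ℂ) * rename Sum.inl (σg (X k)) *
      (X (Sum.inr 0) : MvPolynomial (Fin (n + 1) ⊕ Fin 2) ℂ) ^ (k : ℕ) *
      X (Sum.inr 1) ^ (n - k) =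
    ∑ k : Fin (n + 1), C (n.choose k : ℂ) * rename Sum.inl (X k) *
      (C α * X (Sum.inr 0) + C β * X (Sum.inr 1)) ^ (k : ℕ) *
      (C γ * X (Sum.inr 0) + C δ * X (Sum.inr 1)) ^ (n - k)

/-- `∑ⱼ fⱼ (αt+β)ʲ (γt+δ)ⁿ⁻ʲ`, i.e. `det(xX + yY)` at `x = αt+β`, `y = γt+δ`. -/
noncomputable def substitutedForm (n : ℕ) (α β γ δ : ℂ) :
    Polynomial (MvPolynomial (Fin n × Fin n × Fin 2) ℂ) :=
  ∑ j : Fin (n + 1), (Polynomial.C (C α) * Polynomial.X + Polynomial.C (C β)) ^ (j : ℕ) *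
    (Polynomial.C (C γ) * Polynomial.X + Polynomial.C (C δ)) ^ (n - j) * Polynomial.C (fPoly n j)

variable {n : ℕ} (α β γ δ : ℂ)

theorem coeff_substitutedForm (k : Fin (n + 1)) :
    (substitutedForm n α β γ δ).coeff k = sl2Action n α β γ δ (fPoly n k) := by
  refine Eq.trans ?_ (coeff_det_X_smul_add_genericMatrix (sl2Action n α β γ δ).toRingHom k)
  rw [substitutedForm, ← det_smul_add_smul_genericMatrix Polynomial.C]
  refine congrArg (fun M : Matrix (Fin n) (Fin n) (Polynomial _) => (det M).coeff k)
    (Matrix.ext fun i j => ?_)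
  simp [genericMatrix, sl2Action]
  ring

theorem choose_smul_psiMap_eq_coeff_substitutedForm
    (σg : MvPolynomial (Fin (n + 1)) ℂ →ₐ[ℂ] MvPolynomial (Fin (n + 1)) ℂ)
    (h : IsBinaryFormAction α β γ δ σg) (k : Fin (n + 1)) :
    (n.choose k : ℂ) • psiMap n (σg (X k)) = (substitutedForm n α β γ δ).coeff k := by
  set Φ : MvPolynomial (Fin (n + 1) ⊕ Fin 2) ℂ →ₐ[ℂ]
      Polynomial (MvPolynomial (Fin n × Fin n × Fin 2) ℂ) :=
    aeval (Sum.elim (fun k => Polynomial.C (psiMap n (X k))) ![Polynomial.X, 1])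
  have hren (p : MvPolynomial (Fin (n + 1)) ℂ) :
      Φ (rename Sum.inl p) = Polynomial.C (psiMap n p) := by
    induction p using MvPolynomial.induction_on <;> simp_all [Φ]
  have hL (j : Fin (n + 1)) : Φ (C (n.choose j : ℂ) * rename Sum.inl (σg (X j)) *
      X (Sum.inr 0) ^ (j : ℕ) * X (Sum.inr 1) ^ (n - j)) =
        Polynomial.C ((n.choose j : ℂ) • psiMap n (σg (X j))) * Polynomial.X ^ (j : ℕ) := by
    simp [Φ, hren, Nat.cast_smul_eq_nsmul]
  have hR (j : Fin (n + 1)) : Φ (C (n.choose j : ℂ) * rename Sum.inl (X j) *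
      (C α * X (Sum.inr 0) + C β * X (Sum.inr 1)) ^ (j : ℕ) *
        (C γ * X (Sum.inr 0) + C δ * X (Sum.inr 1)) ^ (n - j)) =
      (Polynomial.C (C α) * Polynomial.X + Polynomial.C (C β)) ^ (j : ℕ) *
        (Polynomial.C (C γ) * Polynomial.X + Polynomial.C (C δ)) ^ (n - j) *
          Polynomial.C (fPoly n j) := by
    have hc : (n.choose j : Polynomial (MvPolynomial (Fin n × Fin n × Fin 2) ℂ)) *
        Polynomial.C ((n.choose j : ℂ)⁻¹ • fPoly n j) = Polynomial.C (fPoly n j) := by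
      rw [← map_natCast Polynomial.C, ← map_mul, ← nsmul_eq_mul, ← Nat.cast_smul_eq_nsmul ℂ,
        smul_smul, mul_inv_cancel₀ (cast_choose_ne_zero j), one_smul]
    simp [Φ, psiMap_X, hc]
    ring
  have hΦ := congrArg Φ h
  simp only [map_sum, hL, hR] at hΦ
  rw [substitutedForm, ← hΦ, Polynomial.coeff_sum_fin_C_mul_X_pow]

theorem psiMap_comp_eq_sl2Action_comp
    (σg : MvPolynomial (Fin (n + 1)) ℂ →ₐ[ℂ] MvPolynomial (Fin (n + 1)) ℂ)
    (h : IsBinaryFormAction α β γ δ σg) :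
    (psiMap n).comp σg = (sl2Action n α β γ δ).comp (psiMap n) := by
  refine algHom_ext fun k => ?_
  have hk := (choose_smul_psiMap_eq_coeff_substitutedForm α β γ δ σg h k).trans
    (coeff_substitutedForm α β γ δ k)
  rw [AlgHom.comp_apply, AlgHom.comp_apply, psiMap_X, map_smul, ← hk, smul_smul,
    inv_mul_cancel₀ (cast_choose_ne_zero k), one_smul]

end Equivariance

/-- the ℂ-algebra map ℂ[ξ₀,...,ξ_n] → ℂ[f_{n,0},...,f_{0,n}] sending
C(n,k)·ξ_k ↦ f_{k,n-k} is an isomorphism of SL(2,ℂ)-modules: it is injective with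
image exactly ℂ[f_{n,0},...,f_{0,n}], and it intertwines the classical SL(2,ℂ)-action
on binary-form coefficients (the algebra map σ_g determined by
Σ C(n,k) σ_g(ξ_k) x̄^k ȳ^{n-k} = Σ C(n,k) ξ_k (αx̄+βȳ)^k (γx̄+δȳ)^{n-k}) with the
action X ↦ αX+γY, Y ↦ βX+δY on ℂ[X,Y]. -/
theorem psi_equivariant_isomorphism (n : ℕ) (hn : 1 ≤ n) :
    Function.Injective (psiMap n) ∧
    (psiMap n).range =
      Algebra.adjoin ℂ (Set.range fun k : Fin (n + 1) => fPoly n (k : ℕ)) ∧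
    ∀ (α β γ δ : ℂ), α * δ - β * γ = 1 →
      ∀ σg : MvPolynomial (Fin (n + 1)) ℂ →ₐ[ℂ] MvPolynomial (Fin (n + 1)) ℂ,
        (∑ k : Fin (n + 1),
            MvPolynomial.C ((n.choose (k : ℕ) : ℂ)) *
              MvPolynomial.rename Sum.inl (σg (MvPolynomial.X k)) *
              (MvPolynomial.X (Sum.inr 0) :
                MvPolynomial (Fin (n + 1) ⊕ Fin 2) ℂ) ^ (k : ℕ) *
              MvPolynomial.X (Sum.inr 1) ^ (n - (k : ℕ)) =
          ∑ k : Fin (n + 1),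
            MvPolynomial.C ((n.choose (k : ℕ) : ℂ)) *
              MvPolynomial.rename Sum.inl (MvPolynomial.X k) *
              (MvPolynomial.C α * MvPolynomial.X (Sum.inr 0) +
                MvPolynomial.C β * MvPolynomial.X (Sum.inr 1)) ^ (k : ℕ) *
              (MvPolynomial.C γ * MvPolynomial.X (Sum.inr 0) +
                MvPolynomial.C δ * MvPolynomial.X (Sum.inr 1)) ^ (n - (k : ℕ))) →
        (psiMap n).comp σg = (sl2Action n α β γ δ).comp (psiMap n) := by
  exact ⟨psiMap_injective hn, psiMap_range,
    fun α β γ δ _ => psiMap_comp_eq_sl2Action_comp α β γ δ⟩
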